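/- arXiv:1108.5058 — 2 statements merged into one kernel-verified Lean document; each statement's English description precedes it below -/
import Mathlib

section
/- The linear discrete-time system (A) is P-strongly exponentially dichotomic if and only if there exist constants N ≥ 1, α > 0 and β with 0 ≤ β < α such that e^{α(m−n)}(‖𝒜_P(m,p)x‖ + ‖𝒜_Q(n,p)x‖) ≤ N(e^{βn}‖𝒜_P(n,p)x‖ + e^{βm}‖𝒜_Q(m,p)x‖) for all natural numbers m ≥ n ≥ p and all x ∈ X. -/
open Real

/-- The evolution operator started at time `n`, after `k` steps:
`A(n+k) ⋯ A(n+1)`. -/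
noncomputable def evolFrom {X : Type*} [NormedAddCommGroup X] [NormedSpace ℝ X]
    (A : ℕ → X →L[ℝ] X) (n : ℕ) : ℕ → X →L[ℝ] X
  | 0 => 1
  | k + 1 => (A (n + k + 1)).comp (evolFrom A n k)

/-- The evolution operator `𝒜(m,n) = A(m) ⋯ A(n+1)` for `m ≥ n`, `𝒜(n,n) = I`. -/
noncomputable def evol {X : Type*} [NormedAddCommGroup X] [NormedSpace ℝ X]
    (A : ℕ → X →L[ℝ] X) (m n : ℕ) : X →L[ℝ] X :=
  evolFrom A n (m - n)

/-- `𝒜_P(m,n) = 𝒜(m,n) P(n)`. -/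
noncomputable def evolP {X : Type*} [NormedAddCommGroup X] [NormedSpace ℝ X]
    (A P : ℕ → X →L[ℝ] X) (m n : ℕ) : X →L[ℝ] X :=
  (evol A m n).comp (P n)

/-- `𝒜_Q(m,n) = 𝒜(m,n) Q(n)` where `Q(n) = I - P(n)`. -/
noncomputable def evolQ {X : Type*} [NormedAddCommGroup X] [NormedSpace ℝ X]
    (A P : ℕ → X →L[ℝ] X) (m n : ℕ) : X →L[ℝ] X :=
  (evol A m n).comp (1 - P n)

/-- The system is P-strongly exponentially dichotomic. -/
def IsSED {X : Type*} [NormedAddCommGroup X] [NormedSpace ℝ X]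
    (A P : ℕ → X →L[ℝ] X) : Prop :=
  ∃ N α β : ℝ, 1 ≤ N ∧ 0 < α ∧ 0 ≤ β ∧ β < α ∧
    ∀ m n : ℕ, n ≤ m → ∀ x : X,
      exp (α * ((m : ℝ) - n)) * (‖evolP A P m n x‖ + ‖(1 - P n) x‖) ≤
        N * (exp (β * n) * ‖P n x‖ + exp (β * m) * ‖evolQ A P m n x‖)

lemma evolFrom_comm {X : Type*} [NormedAddCommGroup X] [NormedSpace ℝ X]
    (A P : ℕ → X →L[ℝ] X)
    (hCompat : ∀ n, (A (n + 1)).comp (P n) = (P (n + 1)).comp (A (n + 1))) :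
    ∀ n k, (evolFrom A n k).comp (P n) = (P (n + k)).comp (evolFrom A n k) := by
  intro n k
  induction k with
  | zero => ext x; simp [evolFrom]
  | succ k ih =>
    show ((A (n + k + 1)).comp (evolFrom A n k)).comp (P n) = _
    rw [ContinuousLinearMap.comp_assoc, ih, ← ContinuousLinearMap.comp_assoc,
      hCompat (n + k)]
    rfl

lemma evolFrom_add {X : Type*} [NormedAddCommGroup X] [NormedSpace ℝ X]
    (A : ℕ → X →L[ℝ] X) :
    ∀ p j k, evolFrom A p (j + k) = (evolFrom A (p + j) k).comp (evolFrom A p j) := by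
  intro p j k
  induction k with
  | zero => ext x; simp [evolFrom]
  | succ k ih =>
    show (A (p + (j + k) + 1)).comp (evolFrom A p (j + k)) = _
    rw [ih, ← Nat.add_assoc]
    rfl

lemma comm_apply {X : Type*} [NormedAddCommGroup X] [NormedSpace ℝ X]
    (A P : ℕ → X →L[ℝ] X)
    (hCompat : ∀ n, (A (n + 1)).comp (P n) = (P (n + 1)).comp (A (n + 1)))
    {p n : ℕ} (h : p ≤ n) (x : X) :
    P n (evol A n p x) = evol A n p (P p x) := by
  have := evolFrom_comm A P hCompat p (n - p)
  rw [Nat.add_sub_cancel' h] at this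
  have := congrArg (fun T => T x) this
  simpa [evol] using this.symm

lemma cocycle_apply {X : Type*} [NormedAddCommGroup X] [NormedSpace ℝ X]
    (A : ℕ → X →L[ℝ] X) {p n m : ℕ} (hpn : p ≤ n) (hnm : n ≤ m) (x : X) :
    evol A m n (evol A n p x) = evol A m p x := by
  have h := evolFrom_add A p (n - p) (m - n)
  rw [Nat.add_sub_cancel' hpn] at h
  have hsum : n - p + (m - n) = m - p := by omega
  rw [hsum] at h
  have := congrArg (fun T => T x) h
  simpa [evol] using this.symm

/-- Remark: three-index characterization of strong exponential dichotomy. -/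
theorem strong_exponential_dichotomy_iff_three_indices
    {X : Type*} [NormedAddCommGroup X] [NormedSpace ℝ X] [CompleteSpace X]
    (A P : ℕ → X →L[ℝ] X)
    (hProj : ∀ n, (P n).comp (P n) = P n)
    (hCompat : ∀ n, (A (n + 1)).comp (P n) = (P (n + 1)).comp (A (n + 1))) :
    IsSED A P ↔
      ∃ N α β : ℝ, 1 ≤ N ∧ 0 < α ∧ 0 ≤ β ∧ β < α ∧
        ∀ m n p : ℕ, p ≤ n → n ≤ m → ∀ x : X,
          exp (α * ((m : ℝ) - n)) * (‖evolP A P m p x‖ + ‖evolQ A P n p x‖) ≤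
            N * (exp (β * n) * ‖evolP A P n p x‖ + exp (β * m) * ‖evolQ A P m p x‖) := by
  constructor
  · rintro ⟨N, α, β, hN, hα, hβ, hβα, H⟩
    refine ⟨N, α, β, hN, hα, hβ, hβα, ?_⟩
    intro m n p hpn hnm x
    have key := H m n hnm (evol A n p x)
    have h1 : P n (evol A n p x) = evolP A P n p x := by
      rw [comm_apply A P hCompat hpn x]; rfl
    have h2 : (1 - P n) (evol A n p x) = evolQ A P n p x := by
      simp only [ContinuousLinearMap.sub_apply, ContinuousLinearMap.one_apply,
        comm_apply A P hCompat hpn x, evolQ, ContinuousLinearMap.comp_apply,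
        ← map_sub]
    have h3 : evolP A P m n (evol A n p x) = evolP A P m p x := by
      simp only [evolP, ContinuousLinearMap.comp_apply, h1]
      show evol A m n (evol A n p (P p x)) = _
      exact cocycle_apply A hpn hnm _
    have h4 : evolQ A P m n (evol A n p x) = evolQ A P m p x := by
      simp only [evolQ, ContinuousLinearMap.comp_apply, h2]
      show evol A m n (evol A n p ((1 - P p) x)) = _
      exact cocycle_apply A hpn hnm _
    rwa [h1, h2, h3, h4] at key
  · rintro ⟨N, α, β, hN, hα, hβ, hβα, H⟩
    refine ⟨N, α, β, hN, hα, hβ, hβα, ?_⟩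
    intro m n hnm x
    have key := H m n n le_rfl hnm x
    have h1 : evolP A P n n x = P n x := by
      simp [evolP, evol, Nat.sub_self, evolFrom]
    have h2 : evolQ A P n n x = (1 - P n) x := by
      simp [evolQ, evol, Nat.sub_self, evolFrom]
    rwa [h1, h2] at key
end

section
/- Consider the system on X = ℝ² given by A(n)(x₁,x₂) = (c₁ a_n x₁, c₂ a_n x₂) with c₁ = e^{−3/2}, c₂ = e^{1/2}, where a_n = e^{−n} if n is even and a_n = e^{n+1} if n is odd, with projections P(n)(x₁,x₂) = (x₁,0). Then with N = e, α = 1/2 and β = 1 one has e^{α(m−n)}(‖𝒜_P(m,n)x‖ + ‖Q(n)x‖) ≤ N(e^{βn}‖P(n)x‖ + e^{βm}‖𝒜_Q(m,n)x‖) for all m ≥ n and all x ∈ ℝ²; in particular the system is P-exponentially dichotomic. -/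
open Real

/-- The system is P-exponentially dichotomic. -/
def IsED {X : Type*} [NormedAddCommGroup X] [NormedSpace ℝ X]
    (A P : ℕ → X →L[ℝ] X) : Prop :=
  ∃ N α β : ℝ, 1 ≤ N ∧ 0 < α ∧ 0 ≤ β ∧
    ∀ m n : ℕ, n ≤ m → ∀ x : X,
      exp (α * ((m : ℝ) - n)) * (‖evolP A P m n x‖ + ‖(1 - P n) x‖) ≤
        N * (exp (β * n) * ‖P n x‖ + exp (β * m) * ‖evolQ A P m n x‖)

/-- The diagonal operator `(x₁, x₂) ↦ (u x₁, v x₂)` on `ℝ²`. -/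
noncomputable def diagCLM (u v : ℝ) : ℝ × ℝ →L[ℝ] ℝ × ℝ :=
  (u • ContinuousLinearMap.fst ℝ ℝ ℝ).prod (v • ContinuousLinearMap.snd ℝ ℝ ℝ)

/-- The family of projections `P(n)(x₁, x₂) = (x₁, 0)` on `ℝ²`. -/
noncomputable def projFst : ℕ → (ℝ × ℝ →L[ℝ] ℝ × ℝ) :=
  fun _ => (ContinuousLinearMap.fst ℝ ℝ ℝ).prod 0

/-!
All operators are diagonal, so `𝒜(m,n) = diag(e^{-3(m-n)/2 + E m - E n}, e^{(m-n)/2 + E m - E n})`,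
where `E = cumulativeExponent` (`0` at even `j`, `j + 1` at odd `j`) is the logarithm of
`a 1 ⋯ a j`.
From `0 ≤ E j ≤ j + 1` the stable coefficient, weighted by `e^{(m-n)/2}`, is at most
`e^{-(m-n) + m + 1} = e · e^n`, while the unstable one is at least `e^{(m-n)/2 - (n+1)}`, so
`e · e^m` times it dominates `e^{(m-n)/2}`.
-/

open Finset

lemma diagCLM_apply (u v : ℝ) (x : ℝ × ℝ) : diagCLM u v x = (u * x.1, v * x.2) := rfl

lemma diagCLM_comp (u v u' v' : ℝ) :
    (diagCLM u v).comp (diagCLM u' v') = diagCLM (u * u') (v * v') := by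
  ext <;> simp [diagCLM_apply]

lemma evolFrom_diagCLM (f g : ℕ → ℝ) (n k : ℕ) :
    evolFrom (fun j => diagCLM (f j) (g j)) n k =
      diagCLM (∏ j ∈ Ioc n (n + k), f j) (∏ j ∈ Ioc n (n + k), g j) := by
  induction k with
  | zero => ext <;> simp [evolFrom, diagCLM_apply]
  | succ k ih =>
    rw [evolFrom, ih, diagCLM_comp, ← add_assoc, prod_Ioc_succ_top (by omega),
      prod_Ioc_succ_top (by omega), mul_comm (f _), mul_comm (g _)]

lemma evol_diagCLM (f g : ℕ → ℝ) {m n : ℕ} (hnm : n ≤ m) :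
    evol (fun j => diagCLM (f j) (g j)) m n =
      diagCLM (∏ j ∈ Ioc n m, f j) (∏ j ∈ Ioc n m, g j) := by
  rw [evol, evolFrom_diagCLM, Nat.add_sub_cancel' hnm]

lemma dichotomy_estimate_of_evol_eq_diagCLM {A : ℕ → ℝ × ℝ →L[ℝ] ℝ × ℝ} {m n : ℕ}
    {U V N α β : ℝ} (hevol : evol A m n = diagCLM U V)
    (hU : exp (α * ((m : ℝ) - n)) * |U| ≤ N * exp (β * n))
    (hV : exp (α * ((m : ℝ) - n)) ≤ N * (exp (β * m) * |V|)) (x : ℝ × ℝ) :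
    exp (α * ((m : ℝ) - n)) * (‖evolP A projFst m n x‖ + ‖(1 - projFst n) x‖) ≤
      N * (exp (β * n) * ‖projFst n x‖ + exp (β * m) * ‖evolQ A projFst m n x‖) := by
  have hP : projFst n x = (x.1, 0) := rfl
  have hQ : (1 - projFst n) x = (0, x.2) := by ext <;> simp [projFst]
  rw [evolP, evolQ, ContinuousLinearMap.comp_apply, ContinuousLinearMap.comp_apply, hP, hQ,
    hevol, diagCLM_apply, diagCLM_apply]
  simp only [Prod.norm_mk, mul_zero, norm_zero, norm_mul, Real.norm_eq_abs, abs_nonneg,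
    mul_nonneg, max_eq_left, max_eq_right]
  linarith [mul_le_mul_of_nonneg_right hU (abs_nonneg x.1),
    mul_le_mul_of_nonneg_right hV (abs_nonneg x.2)]

lemma prod_Ioc_eq_exp_sub {a E : ℕ → ℝ} (h : ∀ j, a (j + 1) = exp (E (j + 1) - E j))
    {m n : ℕ} (hnm : n ≤ m) : ∏ j ∈ Ioc n m, a j = exp (E m - E n) := by
  induction m, hnm using Nat.le_induction with
  | base => simp
  | succ m hnm ih => rw [prod_Ioc_succ_top hnm, ih, h, ← exp_add, sub_add_sub_cancel']

noncomputable def cumulativeExponent (j : ℕ) : ℝ := if Even j then 0 else j + 1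

lemma cumulativeExponent_nonneg (j : ℕ) : 0 ≤ cumulativeExponent j := by
  unfold cumulativeExponent; split_ifs <;> positivity

lemma cumulativeExponent_le (j : ℕ) : cumulativeExponent j ≤ j + 1 := by
  unfold cumulativeExponent; split_ifs <;> linarith [(j.cast_nonneg : (0 : ℝ) ≤ j)]

lemma succ_eq_exp_cumulativeExponent_sub {a : ℕ → ℝ}
    (ha : ∀ n, a n = if Even n then exp (-(n : ℝ)) else exp ((n : ℝ) + 1)) (j : ℕ) :
    a (j + 1) = exp (cumulativeExponent (j + 1) - cumulativeExponent j) := by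
  rcases Nat.even_or_odd j with hj | hj
  · have hj' : ¬Even (j + 1) := Nat.not_even_iff_odd.2 hj.add_one
    simp [ha, cumulativeExponent, hj, hj']
  · have hj' : Even (j + 1) := hj.add_one
    simp [ha, cumulativeExponent, hj', Nat.not_even_iff_odd.2 hj]

lemma evol_eq_diagCLM_exp {a : ℕ → ℝ}
    (ha : ∀ n, a n = if Even n then exp (-(n : ℝ)) else exp ((n : ℝ) + 1)) (c₁ c₂ : ℝ)
    {m n : ℕ} (hnm : n ≤ m) :
    evol (fun j => diagCLM (exp c₁ * a j) (exp c₂ * a j)) m n =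
      diagCLM (exp (c₁ * ((m : ℝ) - n) + (cumulativeExponent m - cumulativeExponent n)))
        (exp (c₂ * ((m : ℝ) - n) + (cumulativeExponent m - cumulativeExponent n))) := by
  simp only [evol_diagCLM _ _ hnm, prod_mul_distrib, prod_const, Nat.card_Ioc,
    prod_Ioc_eq_exp_sub (succ_eq_exp_cumulativeExponent_sub ha) hnm, ← exp_nat_mul, ← exp_add,
    Nat.cast_sub hnm, mul_comm c₁, mul_comm c₂]

/-- Example: with `c₁ = e^{-3/2}`, `c₂ = e^{1/2}`, the system is
P-exponentially dichotomic, with `N = e`, `α = 1/2`, `β = 1`. -/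
theorem example_exponential_dichotomy
    (a : ℕ → ℝ)
    (ha : ∀ n, a n = if Even n then exp (-(n : ℝ)) else exp ((n : ℝ) + 1))
    (A : ℕ → ℝ × ℝ →L[ℝ] ℝ × ℝ)
    (hA : ∀ n, A n = diagCLM (exp (-(3 / 2)) * a n) (exp (1 / 2) * a n)) :
    (∀ m n : ℕ, n ≤ m → ∀ x : ℝ × ℝ,
      exp ((1 / 2) * ((m : ℝ) - n)) * (‖evolP A projFst m n x‖ + ‖(1 - projFst n) x‖) ≤
        exp 1 * (exp (1 * (n : ℝ)) * ‖projFst n x‖ +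
          exp (1 * (m : ℝ)) * ‖evolQ A projFst m n x‖)) ∧
    IsED A projFst := by
  obtain rfl : A = _ := funext hA
  refine (fun h => ⟨h, exp 1, 1 / 2, 1, one_le_exp zero_le_one, by norm_num, zero_le_one, h⟩) ?_
  intro m n hnm x
  refine dichotomy_estimate_of_evol_eq_diagCLM (evol_eq_diagCLM_exp ha _ _ hnm) ?_ ?_ x
  · rw [abs_exp, ← exp_add, ← exp_add, exp_le_exp]
    linarith [cumulativeExponent_le m, cumulativeExponent_nonneg n]
  · rw [abs_exp, ← exp_add, ← exp_add, exp_le_exp]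
    linarith [cumulativeExponent_nonneg m, cumulativeExponent_le n,
      (Nat.cast_le.2 hnm : (n : ℝ) ≤ m)]
end
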